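/- There exists a super-lacunary increasing sequence q of positive integers (q_{n+1}/q_n → ∞) with G₂(q) = {0}. -/

import Mathlib

open Filter

/-- `G₂(q)` inside the circle `ℝ/ℤ`; the norm on `AddCircle (1:ℝ)` is the
distance to the nearest integer. -/
noncomputable def G2 (q : ℕ → ℕ) : Set (AddCircle (1:ℝ)) :=
  {t | Summable (fun n => ‖q n • t‖ ^ 2)}

/-!
Erdős–Taylor: if `q (n+1) = a n * q n + 1`, then `t = q (n+1) • t - a n • q n • t`, so
`‖t‖ ≤ ‖q (n+1) • t‖ + a n * ‖q n • t‖`. Once `‖q n • t‖ → 0` this forces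
`‖q n • t‖ ≥ ‖t‖ / (2 a n)` eventually, so `∑ ‖q n • t‖²` can converge with `t ≠ 0` only if
`∑ 1 / (a n)²` does. With `a n = ⌊√n⌋ + 1` we have `a n → ∞` but `1 / (a n)² ≥ 1 / (4 (n+1))`.
-/

theorem sq_mul_one_div_sq_le_sq {x c e : ℝ} (hx : 0 ≤ x) (hc : 0 ≤ c) (h : x ≤ c * e) :
    x ^ 2 * (1 / c ^ 2) ≤ e ^ 2 := by
  rcases hc.eq_or_lt with rfl | hc
  · simpa using sq_nonneg e
  have hxe : x / c ≤ e := (div_le_iff₀ hc).2 (by linarith)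
  calc x ^ 2 * (1 / c ^ 2) = (x / c) ^ 2 := by ring
    _ ≤ e ^ 2 := pow_le_pow_left₀ (by positivity) hxe 2

section Recurrence

variable {q a : ℕ → ℕ}

theorem norm_le_norm_nsmul_succ_add {E : Type*} [SeminormedAddCommGroup E]
    (hq : ∀ n, q (n + 1) = a n * q n + 1) (t : E) (n : ℕ) :
    ‖t‖ ≤ ‖q (n + 1) • t‖ + a n * ‖q n • t‖ := by
  have ht : t = q (n + 1) • t - a n • q n • t := by
    rw [hq, add_smul, one_smul, mul_smul]; abel
  calc ‖t‖ = ‖q (n + 1) • t - a n • q n • t‖ := congrArg _ ht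
    _ ≤ ‖q (n + 1) • t‖ + ‖a n • q n • t‖ := norm_sub_le _ _
    _ ≤ ‖q (n + 1) • t‖ + a n * ‖q n • t‖ := by gcongr; exact norm_nsmul_le

theorem eq_zero_of_summable_sq_norm_nsmul {E : Type*} [NormedAddCommGroup E]
    (hq : ∀ n, q (n + 1) = a n * q n + 1) (ha : ¬ Summable fun n => 1 / (a n : ℝ) ^ 2)
    {t : E} (ht : Summable fun n => ‖q n • t‖ ^ 2) : t = 0 := by
  by_contra h0
  have htpos : 0 < ‖t‖ := norm_pos_iff.2 h0
  have hsmall : ∀ᶠ n in atTop, ‖q (n + 1) • t‖ < ‖t‖ / 2 := by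
    have hsq := ht.tendsto_atTop_zero.eventually
      (gt_mem_nhds (show 0 < (‖t‖ / 2) ^ 2 by positivity))
    filter_upwards [(tendsto_add_atTop_nat 1).eventually hsq] with n hn
    exact lt_of_pow_lt_pow_left₀ 2 (by positivity) hn
  have hbound : ∀ᶠ n in atTop, ‖(‖t‖ / 2) ^ 2 * (1 / (a n : ℝ) ^ 2)‖ ≤ ‖q n • t‖ ^ 2 := by
    filter_upwards [hsmall] with n hn
    rw [Real.norm_of_nonneg (by positivity)]
    have := norm_le_norm_nsmul_succ_add hq t n
    exact sq_mul_one_div_sq_le_sq (by positivity) (Nat.cast_nonneg _) (by linarith)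
  exact ha <| (summable_mul_left_iff (by positivity)).1
    (.of_norm_bounded_eventually_nat ht hbound)

end Recurrence

theorem not_summable_one_div_sq_sqrt_add_one :
    ¬ Summable fun n : ℕ => 1 / ((Nat.sqrt n + 1 : ℕ) : ℝ) ^ 2 := by
  intro hs
  have hharm : Summable fun n : ℕ => 1 / ((n + 1 : ℕ) : ℝ) := by
    refine (summable_mul_left_iff (show (1 / 4 : ℝ) ≠ 0 by norm_num)).1
      (hs.of_nonneg_of_le (fun n => by positivity) fun n => ?_)
    have hsq : (((Nat.sqrt n + 1 : ℕ) : ℝ)) ^ 2 ≤ 4 * ((n + 1 : ℕ) : ℝ) := by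
      exact_mod_cast (show (Nat.sqrt n + 1) ^ 2 ≤ 4 * (n + 1) by
        nlinarith [Nat.sqrt_le' n, Nat.sqrt_le_self n])
    rw [one_div_mul_one_div]
    exact one_div_le_one_div_of_le (by positivity) hsq
  exact Real.not_summable_one_div_natCast ((summable_nat_add_iff 1).1 hharm)

def erdosTaylorSeq : ℕ → ℕ
  | 0 => 1
  | n + 1 => (Nat.sqrt n + 1) * erdosTaylorSeq n + 1

theorem erdosTaylorSeq_succ (n : ℕ) :
    erdosTaylorSeq (n + 1) = (Nat.sqrt n + 1) * erdosTaylorSeq n + 1 := rfl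

theorem erdosTaylorSeq_pos (n : ℕ) : 0 < erdosTaylorSeq n := by
  cases n <;> simp [erdosTaylorSeq]

theorem strictMono_erdosTaylorSeq : StrictMono erdosTaylorSeq :=
  strictMono_nat_of_lt_succ fun n => by
    rw [erdosTaylorSeq_succ]; nlinarith [erdosTaylorSeq_pos n]

theorem tendsto_erdosTaylorSeq_ratio :
    Tendsto (fun n => (erdosTaylorSeq (n + 1) : ℝ) / erdosTaylorSeq n) atTop atTop := by
  have hsqrt : Tendsto (fun n => ((Nat.sqrt n : ℕ) : ℝ)) atTop atTop :=
    tendsto_natCast_atTop_atTop.comp <| tendsto_atTop.2 fun b =>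
      eventually_atTop.2 ⟨b * b, fun n hn => Nat.le_sqrt.2 hn⟩
  refine tendsto_atTop_mono (fun n => ?_) hsqrt
  rw [le_div_iff₀ (by exact_mod_cast erdosTaylorSeq_pos n), erdosTaylorSeq_succ]
  push_cast
  nlinarith [(Nat.cast_pos.2 (erdosTaylorSeq_pos n) : (0 : ℝ) < _)]

/-- There is a super-lacunary increasing sequence `q` of positive integers
(`qₙ₊₁/qₙ → ∞`) with `G₂(q) = {0}`. -/
theorem stmt12 :
    ∃ q : ℕ → ℕ, StrictMono q ∧ (∀ n, 0 < q n) ∧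
      Tendsto (fun n => (q (n + 1) : ℝ) / (q n : ℝ)) atTop atTop ∧
      G2 q = {0} := by
  refine ⟨erdosTaylorSeq, strictMono_erdosTaylorSeq, erdosTaylorSeq_pos,
    tendsto_erdosTaylorSeq_ratio, Set.eq_singleton_iff_unique_mem.2 ⟨?_, fun t ht => ?_⟩⟩
  · simp [G2]
  · exact eq_zero_of_summable_sq_norm_nsmul erdosTaylorSeq_succ
      not_summable_one_div_sq_sqrt_add_one ht
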